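/- arXiv:2210.13531 — 5 statements merged into one kernel-verified Lean document; each statement's English description precedes it below -/
import Mathlib

section
/- Bayesian inversion is compositional: if p is a strictly positive probability distribution on a finite set X, E a stochastic matrix from X to Y and F a stochastic matrix from Y to Z, with q = E(p) and r = F(q) both strictly positive, then the Bayesian inverse of the composite F∘E with respect to p equals the composite of the Bayesian inverses, i.e., (overline{F∘E})_{xz} = ∑_y Ē_{xy} F̄_{yz} for all x ∈ X, z ∈ Z, where Ē_{xy} = E_{yx} p_x / q_y and F̄_{yz} = F_{zy} q_y / r_z. -/
/-- Bayesian inversion is compositional: the Bayesian inverse of a composite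
of stochastic maps (with respect to a strictly positive prior with strictly positive
pushforwards) is the composite of the Bayesian inverses. -/
theorem bayesian_inverse_compositional
    {X Y Z : Type*} [Fintype X] [Fintype Y] [Fintype Z]
    (p : X → ℝ) (hp : ∀ x, 0 < p x) (hpsum : ∑ x, p x = 1)
    (E : Y → X → ℝ) (hE : ∀ y x, 0 ≤ E y x) (hEcol : ∀ x, ∑ y, E y x = 1)
    (F : Z → Y → ℝ) (hF : ∀ z y, 0 ≤ F z y) (hFcol : ∀ y, ∑ z, F z y = 1)
    (q : Y → ℝ) (hq : ∀ y, q y = ∑ x, E y x * p x) (hqpos : ∀ y, 0 < q y)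
    (r : Z → ℝ) (hr : ∀ z, r z = ∑ y, F z y * q y) (hrpos : ∀ z, 0 < r z) :
    ∀ (x : X) (z : Z),
      ((∑ y, F z y * E y x) * p x) / r z
        = ∑ y, (E y x * p x / q y) * (F z y * q y / r z) := by
  intro x z
  rw [Finset.sum_mul, Finset.sum_div]
  apply Finset.sum_congr rfl
  intro y _
  have hqy := (hqpos y).ne'
  field_simp
end

section
/- Isomorphisms of matrix algebras preserving states: let E : Mₙ(ℂ) → Mₙ(ℂ) be a completely positive trace-preserving map admitting a completely positive trace-preserving inverse F (F∘E = id = E∘F). Then the Hilbert–Schmidt adjoint E* is a *-homomorphism, i.e., E*(A₁† A₂) = E*(A₁)† E*(A₂) for all A₁, A₂, and E*(A†) = E*(A)† for all A. -/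
open Matrix ComplexOrder

/-- A linear map between matrix algebras is completely positive if all its ampliations
`id_k ⊗ Φ` preserve positive semidefiniteness. -/
def IsCP {A B : Type*} [Fintype A] [Fintype B]
    (Φ : Matrix A A ℂ →ₗ[ℂ] Matrix B B ℂ) : Prop :=
  ∀ (k : ℕ) (M : Matrix (Fin k × A) (Fin k × A) ℂ), M.PosSemidef →
    (Matrix.of fun p q : Fin k × B =>
      Φ (Matrix.of fun a b => M (p.1, a) (q.1, b)) p.2 q.2).PosSemidef

set_option linter.unusedSectionVars false
set_option maxHeartbeats 1000000

section Aux

lemma trace_cT_mul_single {n : ℕ} (M : Matrix (Fin n) (Fin n) ℂ) (a b : Fin n) :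
    (Mᴴ * Matrix.single a b 1).trace = star (M a b) := by
  simp [Matrix.trace, Matrix.diag, Matrix.mul_apply, Matrix.single,
    Matrix.conjTranspose_apply, ite_and, mul_ite, mul_one, mul_zero,
    Finset.sum_ite_eq, Finset.sum_ite_eq']

lemma trace_pair_ext {n : ℕ} {M N : Matrix (Fin n) (Fin n) ℂ}
    (h : ∀ X, (Mᴴ * X).trace = (Nᴴ * X).trace) : M = N := by
  ext a b
  have := h (Matrix.single a b 1)
  rw [trace_cT_mul_single, trace_cT_mul_single] at this
  exact star_injective this

lemma trace_cT_mul_comm {n : ℕ} (X Y : Matrix (Fin n) (Fin n) ℂ) :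
    (Xᴴ * Y).trace = star ((Yᴴ * X).trace) := by
  rw [← Matrix.trace_conjTranspose, Matrix.conjTranspose_mul, Matrix.conjTranspose_conjTranspose]

lemma trace_cT_mul_self_nonneg {m : Type*} [Fintype m] (D : Matrix m m ℂ) :
    0 ≤ (Dᴴ * D).trace := by
  rw [Matrix.trace]
  refine Finset.sum_nonneg fun i _ => ?_
  rw [Matrix.diag_apply, Matrix.mul_apply]
  refine Finset.sum_nonneg fun j _ => ?_
  rw [Matrix.conjTranspose_apply]
  exact star_mul_self_nonneg _

lemma trace_psd_mul_nonneg {m : Type*} [Fintype m] [DecidableEq m]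
    {P Q : Matrix m m ℂ} (hP : P.PosSemidef) (hQ : Q.PosSemidef) :
    0 ≤ (P * Q).trace := by
  obtain ⟨B, rfl⟩ : ∃ B : Matrix m m ℂ, P = Bᴴ * B := by
    open scoped MatrixOrder Matrix.Norms.L2Operator in
    exact CStarAlgebra.nonneg_iff_eq_star_mul_self.mp hP.nonneg
  obtain ⟨C, rfl⟩ : ∃ C : Matrix m m ℂ, Q = Cᴴ * C := by
    open scoped MatrixOrder Matrix.Norms.L2Operator in
    exact CStarAlgebra.nonneg_iff_eq_star_mul_self.mp hQ.nonneg
  have : (Bᴴ * B * (Cᴴ * C)).trace = ((B * Cᴴ)ᴴ * (B * Cᴴ)).trace := by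
    rw [Matrix.conjTranspose_mul, Matrix.conjTranspose_conjTranspose]
    rw [show Bᴴ * B * (Cᴴ * C) = (Bᴴ * B * Cᴴ) * C by noncomm_ring,
      Matrix.trace_mul_comm]
    noncomm_ring
  rw [this]
  exact trace_cT_mul_self_nonneg _

lemma psd_diag_nonneg {m : Type*} [Fintype m] [DecidableEq m]
    {X : Matrix m m ℂ} (h : X.PosSemidef) (i : m) : 0 ≤ X i i := by
  have := h.dotProduct_mulVec_nonneg (Pi.single i 1)
  simpa [dotProduct, Matrix.mulVec, Pi.single_apply, apply_ite,
    Finset.sum_ite_eq, Finset.sum_ite_eq'] using this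

lemma psd_neg_psd_eq_zero {m : Type*} [Fintype m] [DecidableEq m]
    {X : Matrix m m ℂ} (h1 : X.PosSemidef) (h2 : (-X).PosSemidef) : X = 0 := by
  have hdiag : ∀ i, X i i = 0 := fun i => by
    have a1 := psd_diag_nonneg h1 i
    have a2 := psd_diag_nonneg h2 i
    rw [Matrix.neg_apply] at a2
    exact le_antisymm (neg_nonneg.mp a2) a1
  obtain ⟨B, rfl⟩ : ∃ B : Matrix m m ℂ, X = Bᴴ * B := by
    open scoped MatrixOrder Matrix.Norms.L2Operator in
    exact CStarAlgebra.nonneg_iff_eq_star_mul_self.mp h1.nonneg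
  have htr : (Bᴴ * B).trace = 0 := by
    rw [Matrix.trace]
    exact Finset.sum_eq_zero fun i _ => hdiag i
  have hterm : ∀ i ∈ Finset.univ, ∀ j ∈ Finset.univ,
      star (B j i) * (B j i) = (0:ℂ) → True := fun _ _ _ _ _ => trivial
  have hB : B = 0 := by
    ext j i
    have expand : (Bᴴ * B).trace = ∑ i, ∑ j, star (B j i) * (B j i) := by
      simp [Matrix.trace, Matrix.diag_apply, Matrix.mul_apply, Matrix.conjTranspose_apply]
    rw [expand] at htr
    have hz : ∀ i ∈ (Finset.univ : Finset m), (0:ℂ) ≤ ∑ j, star (B j i) * (B j i) :=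
      fun i _ => Finset.sum_nonneg fun j _ => star_mul_self_nonneg _
    have h0 := (Finset.sum_eq_zero_iff_of_nonneg hz).mp htr i (Finset.mem_univ i)
    have hz2 : ∀ j ∈ (Finset.univ : Finset m), (0:ℂ) ≤ star (B j i) * (B j i) :=
      fun j _ => star_mul_self_nonneg _
    have h00 := (Finset.sum_eq_zero_iff_of_nonneg hz2).mp h0 j (Finset.mem_univ j)
    have : Complex.normSq (B j i) = 0 := by
      have : (B j i) * star (B j i) = 0 := by rw [mul_comm]; exact h00
      simpa [Complex.mul_conj, Complex.star_def] using this
    simpa using Complex.normSq_eq_zero.mp this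
  rw [hB]
  simp

end Aux

section Herm

variable {m : Type*} [Fintype m] [DecidableEq m]

private lemma single_comb (i j : m) (hij : i ≠ j) (c d : ℂ) :
    (fun k => if k = i then c else if k = j then d else 0)
      = (Pi.single i c : m → ℂ) + (Pi.single j d : m → ℂ) := by
  ext k
  by_cases h1 : k = i
  · subst h1; simp [Pi.single_apply, hij]
  · by_cases h2 : k = j
    · subst h2; simp [Pi.single_apply, h1]
    · simp [Pi.single_apply, h1, h2]

private lemma quad_eval (M : Matrix m m ℂ) (i j : m) (hij : i ≠ j) (c d : ℂ) :
    star (fun k => if k = i then c else if k = j then d else 0) ⬝ᵥ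
      (M *ᵥ fun k => if k = i then c else if k = j then d else 0)
    = star c * c * M i i + star c * d * M i j + star d * c * M j i + star d * d * M j j := by
  have hstar : star (fun k => if k = i then c else if k = j then d else 0)
      = (fun k => if k = i then star c else if k = j then star d else 0) := by
    ext k
    simp only [Pi.star_apply]
    split_ifs <;> simp
  rw [hstar, single_comb i j hij (star c) (star d), single_comb i j hij c d,
    Matrix.mulVec_add, Matrix.mulVec_single, Matrix.mulVec_single]
  rw [add_dotProduct, dotProduct_add, dotProduct_add,
    single_dotProduct, single_dotProduct, single_dotProduct,
    single_dotProduct]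
  simp only [Pi.add_apply, Pi.smul_apply, op_smul_eq_mul, Matrix.col_apply]
  ring

lemma isHermitian_of_quad_real (M : Matrix m m ℂ)
    (h : ∀ v : m → ℂ, star (star v ⬝ᵥ M *ᵥ v) = star v ⬝ᵥ M *ᵥ v) : M.IsHermitian := by
  have diag : ∀ i, star (M i i) = M i i := by
    intro i
    have := h (Pi.single i 1)
    have e : star (Pi.single i 1 : m → ℂ) ⬝ᵥ M *ᵥ (Pi.single i 1 : m → ℂ) = M i i := by
      rw [Matrix.mulVec_single]
      have : star (Pi.single i 1 : m → ℂ) = (Pi.single i 1 : m → ℂ) := by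
        ext k; simp [Pi.single_apply, apply_ite]
      rw [this, single_dotProduct]
      simp
    rwa [e] at this
  rw [Matrix.IsHermitian]
  ext i j
  rw [Matrix.conjTranspose_apply]
  by_cases hij : j = i
  · subst hij; exact diag j
  · -- use vectors supported on {j, i}
    have h1 := h (fun k => if k = j then 1 else if k = i then 1 else 0)
    have h2 := h (fun k => if k = j then 1 else if k = i then Complex.I else 0)
    rw [quad_eval M j i hij 1 1] at h1
    rw [quad_eval M j i hij 1 Complex.I] at h2
    have dj := diag j
    have di := diag i
    simp only [Complex.star_def, map_add, _root_.map_mul, star_one, one_mul, mul_one,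
      Complex.conj_I, map_neg, neg_mul] at h1 h2 dj di ⊢
    rw [Complex.ext_iff] at h1 h2 dj di ⊢
    simp only [Complex.add_re, Complex.add_im, Complex.mul_re, Complex.mul_im,
      Complex.conj_re, Complex.conj_im, Complex.neg_re, Complex.neg_im,
      Complex.I_re, Complex.I_im, zero_mul, one_mul, mul_zero, mul_one, zero_add, add_zero,
      zero_sub, sub_zero, neg_neg, neg_zero] at h1 h2 dj di ⊢
    obtain ⟨h1r, h1i⟩ := h1
    obtain ⟨h2r, h2i⟩ := h2
    obtain ⟨djr, dji⟩ := dj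
    obtain ⟨dir, dii⟩ := di
    constructor <;> linarith

end Herm

section Amp

variable {n : ℕ}

-- block trace rearrangement
lemma trace_amp (Φ : Matrix (Fin n) (Fin n) ℂ →ₗ[ℂ] Matrix (Fin n) (Fin n) ℂ)
    {k : ℕ} (A M : Matrix (Fin k × Fin n) (Fin k × Fin n) ℂ) :
    (Aᴴ * (Matrix.of fun p q : Fin k × Fin n =>
        Φ (Matrix.of fun a b => M (p.1, a) (q.1, b)) p.2 q.2)).trace
    = ∑ p1 : Fin k, ∑ q1 : Fin k,
        (((Matrix.of fun a b => A (p1, a) (q1, b)) : Matrix (Fin n) (Fin n) ℂ)ᴴ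
          * Φ (Matrix.of fun a b => M (p1, a) (q1, b))).trace := by
  simp only [Matrix.trace, Matrix.diag_apply, Matrix.mul_apply, Matrix.conjTranspose_apply,
    Matrix.of_apply, Fintype.sum_prod_type]
  -- LHS: ∑ p1, ∑ p2, ∑ q1, ∑ q2, star (A (q1,q2) (p1,p2)) * Φ (M-block q1 p1) q2 p2
  -- RHS: ∑ p1, ∑ q1, ∑ a, ∑ b, star (A (p1,b) (q1,a)) * Φ (M-block p1 q1) b a
  exact (Finset.sum_congr rfl fun p1 _ => Finset.sum_comm).trans Finset.sum_comm

lemma quad_eq_trace {m : Type*} [Fintype m] (N : Matrix m m ℂ) (v : m → ℂ) :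
    star v ⬝ᵥ N *ᵥ v = ((Matrix.of fun p q => v p * star (v q))ᴴ * N).trace := by
  simp only [dotProduct, Matrix.mulVec, Matrix.trace, Matrix.diag_apply,
    Matrix.mul_apply, Matrix.conjTranspose_apply, Matrix.of_apply, Pi.star_apply,
    dotProduct]
  rw [Finset.sum_comm]
  refine Finset.sum_congr rfl fun q _ => ?_
  rw [Finset.mul_sum]
  refine Finset.sum_congr rfl fun p _ => ?_
  simp only [star_mul', star_star]
  ring

lemma rank_one_psd {m : Type*} [Fintype m] [DecidableEq m] (v : m → ℂ) :
    (Matrix.of fun p q => v p * star (v q)).PosSemidef := by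
  refine Matrix.PosSemidef.of_dotProduct_mulVec_nonneg ?_ ?_
  · ext p q
    simp [Matrix.conjTranspose_apply, star_mul', mul_comm]
  · intro x
    have : star x ⬝ᵥ (Matrix.of fun p q => v p * star (v q)) *ᵥ x
        = star (∑ p, star (x p) * v p) * (∑ p, star (x p) * v p) := by
      simp only [dotProduct, Matrix.mulVec, Matrix.of_apply, Pi.star_apply,
        dotProduct, star_sum, Finset.sum_mul, Finset.mul_sum, star_mul', star_star]
      refine Finset.sum_congr rfl fun q _ => Finset.sum_congr rfl fun p _ => by ring
    rw [this]
    exact star_mul_self_nonneg _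

end Amp

section Adj

variable {n : ℕ}
variable (E Estar : Matrix (Fin n) (Fin n) ℂ →ₗ[ℂ] Matrix (Fin n) (Fin n) ℂ)

lemma trace_cT_mul_comm' {m : Type*} [Fintype m] (X Y : Matrix m m ℂ) :
    (Xᴴ * Y).trace = star ((Yᴴ * X).trace) := by
  rw [← Matrix.trace_conjTranspose, Matrix.conjTranspose_mul, Matrix.conjTranspose_conjTranspose]

lemma hadj_flip (hadj : ∀ X Y, ((Estar Y)ᴴ * X).trace = (Yᴴ * E X).trace) :
    ∀ X Y, (Yᴴ * Estar X).trace = ((E Y)ᴴ * X).trace := by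
  intro X Y
  rw [trace_cT_mul_comm' Y (Estar X), hadj Y X, ← trace_cT_mul_comm']

lemma amp_adjoint_psd (hcpE : IsCP E)
    (hadj : ∀ X Y, ((Estar Y)ᴴ * X).trace = (Yᴴ * E X).trace)
    {k : ℕ} (M : Matrix (Fin k × Fin n) (Fin k × Fin n) ℂ) (hM : M.PosSemidef) :
    (Matrix.of fun p q : Fin k × Fin n =>
      Estar (Matrix.of fun a b => M (p.1, a) (q.1, b)) p.2 q.2).PosSemidef := by
  set N := Matrix.of fun p q : Fin k × Fin n =>
      Estar (Matrix.of fun a b => M (p.1, a) (q.1, b)) p.2 q.2 with hN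
  have hq : ∀ v : (Fin k × Fin n) → ℂ, 0 ≤ star v ⬝ᵥ N *ᵥ v := by
    intro v
    set R := Matrix.of fun p q : Fin k × Fin n => v p * star (v q) with hR
    have hampR := hcpE k R (rank_one_psd v)
    set ER := Matrix.of fun p q : Fin k × Fin n =>
        E (Matrix.of fun a b => R (p.1, a) (q.1, b)) p.2 q.2 with hER
    have step : star v ⬝ᵥ N *ᵥ v = (ERᴴ * M).trace := by
      rw [quad_eq_trace N v, ← hR, hN, trace_amp Estar R M]
      have perterm : ∀ p1 q1 : Fin k,
          (((Matrix.of fun a b => R (p1, a) (q1, b)) : Matrix (Fin n) (Fin n) ℂ)ᴴ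
            * Estar (Matrix.of fun a b => M (p1, a) (q1, b))).trace
          = ((E (Matrix.of fun a b => R (p1, a) (q1, b)))ᴴ
            * (Matrix.of fun a b => M (p1, a) (q1, b))).trace := by
        intro p1 q1
        exact hadj_flip E Estar hadj _ _
      rw [Finset.sum_congr rfl fun p1 _ => Finset.sum_congr rfl fun q1 _ => perterm p1 q1]
      have : ∀ p1 q1 : Fin k,
          ((E (Matrix.of fun a b => R (p1, a) (q1, b)))ᴴ
            * (Matrix.of fun a b => M (p1, a) (q1, b))).trace
          = star (((Matrix.of fun a b => M (p1, a) (q1, b)) : Matrix (Fin n) (Fin n) ℂ)ᴴ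
            * E (Matrix.of fun a b => R (p1, a) (q1, b))).trace := by
        intro p1 q1; rw [trace_cT_mul_comm']
      rw [Finset.sum_congr rfl fun p1 _ => Finset.sum_congr rfl fun q1 _ => this p1 q1]
      simp_rw [← star_sum]
      rw [← trace_amp E M R]
      exact (trace_cT_mul_comm' ER M).symm
    rw [step, show ERᴴ = ER from hampR.1]
    exact trace_psd_mul_nonneg hampR hM
  refine Matrix.PosSemidef.of_dotProduct_mulVec_nonneg (isHermitian_of_quad_real N fun v => ?_) hq
  have h0 := hq v
  have him : (star v ⬝ᵥ N *ᵥ v).im = 0 := by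
    have := (Complex.le_def.mp h0).2
    simpa using this.symm
  rw [Complex.star_def, Complex.conj_eq_iff_im]
  exact him

end Adj

section Main

variable {n : ℕ}
variable (E Estar : Matrix (Fin n) (Fin n) ℂ →ₗ[ℂ] Matrix (Fin n) (Fin n) ℂ)

/-- 1-positivity of the adjoint. -/
lemma adjoint_pos (hcpE : IsCP E)
    (hadj : ∀ X Y, ((Estar Y)ᴴ * X).trace = (Yᴴ * E X).trace)
    (M : Matrix (Fin n) (Fin n) ℂ) (hM : M.PosSemidef) : (Estar M).PosSemidef := by
  have hM' : (M.submatrix (Prod.snd : Fin 1 × Fin n → Fin n)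
      (Prod.snd : Fin 1 × Fin n → Fin n)).PosSemidef := hM.submatrix _
  have hbig := amp_adjoint_psd E Estar hcpE hadj (k := 1) _ hM'
  have heq : (Matrix.of fun p q : Fin 1 × Fin n =>
      Estar (Matrix.of fun a b => (M.submatrix Prod.snd Prod.snd) (p.1, a) (q.1, b)) p.2 q.2)
      = (Estar M).submatrix (Prod.snd : Fin 1 × Fin n → Fin n) Prod.snd := rfl
  rw [heq] at hbig
  have : Estar M = ((Estar M).submatrix (Prod.snd : Fin 1 × Fin n → Fin n) Prod.snd).submatrix
      (fun j => ((0 : Fin 1), j)) (fun j => ((0 : Fin 1), j)) := rfl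
  rw [this]
  exact hbig.submatrix _

lemma block_T_psd (A : Matrix (Fin n) (Fin n) ℂ) :
    (Matrix.of fun p q : Fin 2 × Fin n =>
      ((!![(1 : Matrix (Fin n) (Fin n) ℂ), A; Aᴴ, Aᴴ * A]) p.1 q.1) p.2 q.2).PosSemidef := by
  have key : (Matrix.of fun p q : Fin 2 × Fin n =>
      ((!![(1 : Matrix (Fin n) (Fin n) ℂ), A; Aᴴ, Aᴴ * A]) p.1 q.1) p.2 q.2)
    = (Matrix.of fun p q : Fin 2 × Fin n =>
        ((!![(1 : Matrix (Fin n) (Fin n) ℂ), A; 0, 0]) p.1 q.1) p.2 q.2)ᴴ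
      * (Matrix.of fun p q : Fin 2 × Fin n =>
        ((!![(1 : Matrix (Fin n) (Fin n) ℂ), A; 0, 0]) p.1 q.1) p.2 q.2) := by
    ext ⟨a, i⟩ ⟨b, j⟩
    simp only [Matrix.mul_apply, Matrix.conjTranspose_apply, Matrix.of_apply,
      Fintype.sum_prod_type, Fin.sum_univ_two]
    fin_cases a <;> fin_cases b <;>
      simp [Matrix.one_apply, Matrix.mul_apply, Matrix.conjTranspose_apply,
        Finset.sum_ite_eq, Finset.sum_ite_eq', mul_comm, eq_comm]
  rw [key]
  exact Matrix.posSemidef_conjTranspose_mul_self _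

/-- Kadison–Schwarz for the adjoint of a CP map, given unitality. -/
lemma adjoint_schwarz (hcpE : IsCP E)
    (hadj : ∀ X Y, ((Estar Y)ᴴ * X).trace = (Yᴴ * E X).trace)
    (hunit : Estar 1 = 1) (A : Matrix (Fin n) (Fin n) ℂ) :
    (Estar (Aᴴ * A) - (Estar A)ᴴ * Estar A).PosSemidef := by
  have hbig : (Matrix.of fun p q : Fin 2 × Fin n =>
      Estar ((!![(1 : Matrix (Fin n) (Fin n) ℂ), A; Aᴴ, Aᴴ * A]) p.1 q.1) p.2 q.2).PosSemidef :=
    amp_adjoint_psd E Estar hcpE hadj (k := 2) _ (block_T_psd A)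
  set N := Matrix.of fun p q : Fin 2 × Fin n =>
      Estar ((!![(1 : Matrix (Fin n) (Fin n) ℂ), A; Aᴴ, Aᴴ * A]) p.1 q.1) p.2 q.2 with hNdef
  have hconj : Estar Aᴴ = (Estar A)ᴴ := by
    ext k l
    have h := congrFun (congrFun hbig.1 ((1 : Fin 2), k)) ((0 : Fin 2), l)
    simp only [hNdef, Matrix.conjTranspose_apply, Matrix.of_apply] at h
    simp only [Matrix.cons_val', Matrix.cons_val_zero, Matrix.cons_val_one, Matrix.head_cons,
      Matrix.head_fin_const, Matrix.empty_val', Matrix.cons_val_fin_one] at h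
    rw [Matrix.conjTranspose_apply]
    exact h.symm ▸ rfl
  set K : Matrix (Fin 2 × Fin n) (Fin n) ℂ :=
    Matrix.of fun p j => ((![-(Estar A), (1 : Matrix (Fin n) (Fin n) ℂ)]) p.1) p.2 j with hKdef
  have hKN : (Kᴴ * N * K).PosSemidef := hbig.conjTranspose_mul_mul_same K
  have claim : Kᴴ * N * K = Estar (Aᴴ * A) - (Estar A)ᴴ * Estar A := by
    ext i j
    simp only [Matrix.mul_apply, Matrix.conjTranspose_apply, Matrix.of_apply, hNdef, hKdef,
      Fintype.sum_prod_type, Fin.sum_univ_two, Matrix.cons_val', Matrix.cons_val_zero,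
      Matrix.cons_val_one, Matrix.head_cons, Matrix.head_fin_const, Matrix.empty_val',
      Matrix.cons_val_fin_one, hunit, hconj, Matrix.one_apply, Matrix.neg_apply,
      Matrix.sub_apply, star_neg, mul_ite, ite_mul, mul_zero, zero_mul, mul_one, one_mul,
      Finset.sum_ite_eq, Finset.sum_ite_eq', Finset.mem_univ, if_true, neg_mul, mul_neg,
      Finset.sum_neg_distrib, star_star]
    simp only [apply_ite (star : ℂ → ℂ), star_one, star_zero, ite_mul, one_mul, zero_mul,
      Finset.sum_ite_eq, Finset.sum_ite_eq', Finset.mem_univ, if_true]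
    ring_nf
    simp
  rw [← claim]
  exact hKN

end Main

section Main2

variable {n : ℕ}

lemma exists_adjoint (F : Matrix (Fin n) (Fin n) ℂ →ₗ[ℂ] Matrix (Fin n) (Fin n) ℂ) :
    ∃ Fstar : Matrix (Fin n) (Fin n) ℂ →ₗ[ℂ] Matrix (Fin n) (Fin n) ℂ,
      ∀ X Y, ((Fstar Y)ᴴ * X).trace = (Yᴴ * F X).trace := by
  refine ⟨{ toFun := fun Y => Matrix.of fun i j =>
              star ((Yᴴ * F (Matrix.single i j 1)).trace),
            map_add' := ?_, map_smul' := ?_ }, ?_⟩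
  · intro Y₁ Y₂
    ext i j
    simp [Matrix.conjTranspose_add, Matrix.add_mul]
  · intro c Y
    ext i j
    simp [Matrix.conjTranspose_smul, Matrix.smul_mul, star_mul', mul_comm]
  · intro X Y
    have key : ∀ a b : Fin n,
        (((Matrix.of fun i j => star ((Yᴴ * F (Matrix.single i j 1)).trace) :
          Matrix (Fin n) (Fin n) ℂ))ᴴ * Matrix.single a b 1).trace
        = (Yᴴ * F (Matrix.single a b 1)).trace := by
      intro a b
      rw [trace_cT_mul_single]
      simp
    conv_lhs => rw [Matrix.matrix_eq_sum_single X]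
    conv_rhs => rw [Matrix.matrix_eq_sum_single X]
    simp only [Matrix.mul_sum, map_sum, Matrix.trace_sum]
    refine Finset.sum_congr rfl fun a _ => Finset.sum_congr rfl fun b _ => ?_
    have hsmul : Matrix.single a b (X a b) = (X a b) • Matrix.single a b 1 := by
      rw [Matrix.smul_single, smul_eq_mul, mul_one]
    rw [hsmul, Matrix.mul_smul, _root_.map_smul, Matrix.mul_smul, Matrix.trace_smul,
      Matrix.trace_smul]
    exact congrArg (X a b • ·) (key a b)

lemma adjoint_unital (E Estar : Matrix (Fin n) (Fin n) ℂ →ₗ[ℂ] Matrix (Fin n) (Fin n) ℂ)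
    (htp : ∀ X, (E X).trace = X.trace)
    (hadj : ∀ X Y, ((Estar Y)ᴴ * X).trace = (Yᴴ * E X).trace) : Estar 1 = 1 :=
  trace_pair_ext fun X => by
    rw [hadj X 1, Matrix.conjTranspose_one, Matrix.one_mul, Matrix.one_mul, htp]

end Main2

/-- If a CPTP map E admits a CPTP inverse, then its Hilbert–Schmidt
adjoint E* is a *-homomorphism. -/
theorem adjoint_of_invertible_cptp_is_star_hom {n : ℕ}
    (E : Matrix (Fin n) (Fin n) ℂ →ₗ[ℂ] Matrix (Fin n) (Fin n) ℂ)
    (hcpE : IsCP E) (htpE : ∀ X, (E X).trace = X.trace)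
    (F : Matrix (Fin n) (Fin n) ℂ →ₗ[ℂ] Matrix (Fin n) (Fin n) ℂ)
    (hcpF : IsCP F) (htpF : ∀ X, (F X).trace = X.trace)
    (hFE : F.comp E = LinearMap.id) (hEF : E.comp F = LinearMap.id)
    (Estar : Matrix (Fin n) (Fin n) ℂ →ₗ[ℂ] Matrix (Fin n) (Fin n) ℂ)
    (hadj : ∀ X Y, ((Estar Y)ᴴ * X).trace = (Yᴴ * E X).trace) :
    (∀ A₁ A₂ : Matrix (Fin n) (Fin n) ℂ, Estar (A₁ᴴ * A₂) = (Estar A₁)ᴴ * Estar A₂) ∧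
    (∀ A : Matrix (Fin n) (Fin n) ℂ, Estar Aᴴ = (Estar A)ᴴ) := by
  obtain ⟨Fstar, hadjF⟩ := exists_adjoint F
  have hFE' : ∀ X, F (E X) = X := fun X => DFunLike.congr_fun hFE X
  have hEF' : ∀ X, E (F X) = X := fun X => DFunLike.congr_fun hEF X
  have hFsEs : ∀ Y, Fstar (Estar Y) = Y := by
    intro Y
    apply trace_pair_ext
    intro X
    rw [hadjF X (Estar Y), hadj (F X) Y, hEF' X]
  have hEsFs : ∀ Y, Estar (Fstar Y) = Y := by
    intro Y
    apply trace_pair_ext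
    intro X
    rw [hadj X (Fstar Y), hadjF (E X) Y, hFE' X]
  have hE1 : Estar 1 = 1 := adjoint_unital E Estar htpE hadj
  have hF1 : Fstar 1 = 1 := adjoint_unital F Fstar htpF hadjF
  have hmult : ∀ A, Estar (Aᴴ * A) = (Estar A)ᴴ * Estar A := by
    intro A
    have hD := adjoint_schwarz E Estar hcpE hadj hE1 A
    have hG := adjoint_schwarz F Fstar hcpF hadjF hF1 (Estar A)
    rw [hFsEs A] at hG
    -- hG : (Fstar ((Estar A)ᴴ * Estar A) - Aᴴ * A).PosSemidef
    have h1 : (Fstar (Estar (Aᴴ * A)) - Fstar ((Estar A)ᴴ * Estar A)).PosSemidef := by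
      have := adjoint_pos F Fstar hcpF hadjF _ hD
      rwa [map_sub] at this
    have h2 : (-(Fstar (Estar (Aᴴ * A)) - Fstar ((Estar A)ᴴ * Estar A))).PosSemidef := by
      rw [neg_sub, hFsEs (Aᴴ * A)]
      exact hG
    have h0 := psd_neg_psd_eq_zero h1 h2
    have : Fstar (Estar (Aᴴ * A) - (Estar A)ᴴ * Estar A) = 0 := by
      rw [map_sub]; exact h0
    have hD0 : Estar (Aᴴ * A) - (Estar A)ᴴ * Estar A = 0 := by
      calc Estar (Aᴴ * A) - (Estar A)ᴴ * Estar A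
          = Estar (Fstar (Estar (Aᴴ * A) - (Estar A)ᴴ * Estar A)) :=
            (hEsFs _).symm
        _ = Estar 0 := by rw [this]
        _ = 0 := map_zero _
    exact sub_eq_zero.mp hD0
  have hmul2 : ∀ A₁ A₂ : Matrix (Fin n) (Fin n) ℂ,
      Estar (A₁ᴴ * A₂) = (Estar A₁)ᴴ * Estar A₂ := by
    intro A₁ A₂
    have h1 := hmult A₁
    have h2 := hmult A₂
    have hs := hmult (A₁ + A₂)
    have ht := hmult (A₁ + Complex.I • A₂)
    simp only [Matrix.conjTranspose_add, Matrix.conjTranspose_smul, Matrix.add_mul,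
      Matrix.mul_add, map_add, Matrix.smul_mul, Matrix.mul_smul, _root_.map_smul, smul_smul,
      Complex.star_def, Complex.conj_I, neg_smul, neg_mul, map_neg, h1, h2] at hs ht
    ext i j
    have hs' := congrFun (congrFun hs i) j
    have ht' := congrFun (congrFun ht i) j
    simp only [Matrix.add_apply, Matrix.smul_apply, Matrix.neg_apply, smul_eq_mul] at hs' ht'
    rw [Complex.ext_iff] at hs' ht' ⊢
    simp only [Complex.add_re, Complex.add_im, Complex.mul_re, Complex.mul_im,
      Complex.neg_re, Complex.neg_im, Complex.I_re, Complex.I_im, zero_mul, one_mul,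
      mul_zero, mul_one, zero_add, add_zero, zero_sub, sub_zero, neg_neg, neg_zero] at hs' ht' ⊢
    obtain ⟨hsr, hsi⟩ := hs'
    obtain ⟨htr, hti⟩ := ht'
    constructor <;> linarith
  refine ⟨hmul2, fun A => ?_⟩
  have := hmul2 A 1
  rwa [Matrix.mul_one, hE1, Matrix.mul_one] at this
end

section
/- Composition of rotated Petz maps: let E : Mₙ(ℂ) → Mₘ(ℂ) be CPTP, α positive definite with β = E(α) positive definite, and for t ∈ ℝ define the rotated Petz map R^t(Y) = α^{1/2 - it} E*(β^{-1/2 + it} Y β^{-1/2 - it}) α^{1/2 + it} (i.e., Ad_{α^{1/2-it}} ∘ E* ∘ Ad_{β^{-1/2+it}}, where α^{z} for complex z is defined by functional calculus and Ad_V(X) = V X V†). Then for all x, y ∈ ℝ, the rotated Petz map at parameter y of the rotated Petz map at parameter x of E equals Ad_{β^{-i(x+y)}} ∘ E ∘ Ad_{α^{i(x+y)}}; that is, R^{P,y}_{β, R^{P,x}_{α,E}} (X) = β^{-i(x+y)} E(α^{i(x+y)} X α^{-i(x+y)}) β^{i(x+y)} for all X ∈ Mₙ(ℂ). -/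
open Matrix ComplexOrder

/-- The square root of a positive semidefinite matrix, as `Matrix.PosSemidef.sqrt` was defined
in Mathlib (December 2024); it has since been removed in favour of `CFC.sqrt`. -/
noncomputable def Matrix.PosSemidef.sqrt {n 𝕜 : Type*} [Fintype n] [DecidableEq n] [RCLike 𝕜]
    {A : Matrix n n 𝕜} (hA : A.PosSemidef) : Matrix n n 𝕜 :=
  hA.1.eigenvectorUnitary.1 * diagonal ((↑) ∘ (√·) ∘ hA.1.eigenvalues) *
  (star hA.1.eigenvectorUnitary : Matrix n n 𝕜)

lemma Matrix.PosSemidef.posSemidef_sqrt {n 𝕜 : Type*} [Fintype n] [DecidableEq n] [RCLike 𝕜]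
    {A : Matrix n n 𝕜} (hA : A.PosSemidef) : hA.sqrt.PosSemidef := by
  unfold Matrix.PosSemidef.sqrt
  have hD : (diagonal (((↑) ∘ (√·) ∘ hA.1.eigenvalues) : n → 𝕜)).PosSemidef := by
    rw [Matrix.posSemidef_diagonal_iff]
    intro i
    simp only [Function.comp_apply]
    exact_mod_cast Real.sqrt_nonneg _
  have := hD.mul_mul_conjTranspose_same (hA.1.eigenvectorUnitary : Matrix n n 𝕜)
  simpa [Matrix.star_eq_conjTranspose] using this

lemma Matrix.PosSemidef.sqrt_mul_self {n 𝕜 : Type*} [Fintype n] [DecidableEq n] [RCLike 𝕜]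
    {A : Matrix n n 𝕜} (hA : A.PosSemidef) : hA.sqrt * hA.sqrt = A := by
  unfold Matrix.PosSemidef.sqrt
  conv_rhs => rw [hA.1.spectral_theorem, Unitary.conjStarAlgAut_apply]
  have hU : (star hA.1.eigenvectorUnitary : Matrix n n 𝕜) * hA.1.eigenvectorUnitary.1 = 1 :=
    Unitary.coe_star_mul_self _
  have hDD : diagonal (((↑) ∘ (√·) ∘ hA.1.eigenvalues) : n → 𝕜) *
      diagonal (((↑) ∘ (√·) ∘ hA.1.eigenvalues) : n → 𝕜) =
      diagonal (RCLike.ofReal ∘ hA.1.eigenvalues) := by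
    rw [diagonal_mul_diagonal]
    congr 1
    funext i
    simp only [Function.comp_apply]
    rw [← RCLike.ofReal_mul, Real.mul_self_sqrt (hA.eigenvalues_nonneg i)]
  calc _ = hA.1.eigenvectorUnitary.1 * diagonal (((↑) ∘ (√·) ∘ hA.1.eigenvalues) : n → 𝕜) *
        ((star hA.1.eigenvectorUnitary : Matrix n n 𝕜) * hA.1.eigenvectorUnitary.1) *
        diagonal (((↑) ∘ (√·) ∘ hA.1.eigenvalues) : n → 𝕜) *
        (star hA.1.eigenvectorUnitary : Matrix n n 𝕜) := by simp only [Matrix.mul_assoc]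
    _ = _ := by rw [hU, Matrix.mul_one, Matrix.mul_assoc _ (diagonal _) (diagonal _), hDD]

lemma trace_ext' {k : ℕ} {P Q : Matrix (Fin k) (Fin k) ℂ}
    (h : ∀ Y, (Pᴴ * Y).trace = (Qᴴ * Y).trace) : P = Q := by
  ext i j
  have h2 := h (Matrix.single i j 1)
  simp only [Matrix.trace, Matrix.diag, Matrix.mul_apply, Matrix.single,
    Matrix.conjTranspose_apply, Matrix.of_apply, mul_ite, mul_one, mul_zero, ite_and,
    Finset.sum_ite_eq, Finset.sum_ite_eq', Finset.mem_univ, if_true] at h2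
  exact star_injective h2

lemma trace_flip {k : ℕ} (P Q : Matrix (Fin k) (Fin k) ℂ) :
    (Pᴴ * Q).trace = star ((Qᴴ * P).trace) := by
  rw [← Matrix.trace_conjTranspose, Matrix.conjTranspose_mul, Matrix.conjTranspose_conjTranspose]

lemma sandwich_trace {k : ℕ} (W B Z : Matrix (Fin k) (Fin k) ℂ) :
    (Wᴴ * (B * Z * Bᴴ)).trace = ((Bᴴ * W * B)ᴴ * Z).trace := by
  rw [Matrix.conjTranspose_mul, Matrix.conjTranspose_mul, Matrix.conjTranspose_conjTranspose]
  rw [show Wᴴ * (B * Z * Bᴴ) = (Wᴴ * B * Z) * Bᴴ by noncomm_ring, Matrix.trace_mul_comm]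
  congr 1
  noncomm_ring


/-- Composition of rotated Petz maps: the rotated Petz map at parameter y
of the rotated Petz map at parameter x of E equals Ad_{β^{-i(x+y)}} ∘ E ∘ Ad_{α^{i(x+y)}}.
Here u t plays the role of α^{it} and v t of β^{it}: they are one-parameter unitary
groups commuting with α^{1/2} and β^{1/2} respectively. -/
theorem rotated_petz_iteration {n m : ℕ}
    (α : Matrix (Fin n) (Fin n) ℂ) (hα : α.PosDef) (hαtr : α.trace = 1)
    (E : Matrix (Fin n) (Fin n) ℂ →ₗ[ℂ] Matrix (Fin m) (Fin m) ℂ)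
    (hcp : IsCP E) (htp : ∀ X, (E X).trace = X.trace)
    (hβ : (E α).PosDef)
    (Estar : Matrix (Fin m) (Fin m) ℂ →ₗ[ℂ] Matrix (Fin n) (Fin n) ℂ)
    (hadj : ∀ X Y, ((Estar Y)ᴴ * X).trace = (Yᴴ * E X).trace)
    (u : ℝ → Matrix (Fin n) (Fin n) ℂ)
    (hu0 : u 0 = 1) (huadd : ∀ s t, u (s + t) = u s * u t)
    (hustar : ∀ s, (u s)ᴴ = u (-s))
    (hucomm : ∀ s, u s * hα.posSemidef.sqrt = hα.posSemidef.sqrt * u s)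
    (v : ℝ → Matrix (Fin m) (Fin m) ℂ)
    (hv0 : v 0 = 1) (hvadd : ∀ s t, v (s + t) = v s * v t)
    (hvstar : ∀ s, (v s)ᴴ = v (-s))
    (hvcomm : ∀ s, v s * hβ.posSemidef.sqrt = hβ.posSemidef.sqrt * v s)
    (x y : ℝ)
    -- Rx is the rotated Petz map R^{P,x}_{α,E} = Ad_{α^{1/2-ix}} ∘ E* ∘ Ad_{β^{-1/2+ix}}
    (Rx : Matrix (Fin m) (Fin m) ℂ →ₗ[ℂ] Matrix (Fin n) (Fin n) ℂ)
    (hRx : ∀ Y, Rx Y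
      = (hα.posSemidef.sqrt * u (-x)) *
          Estar (((hβ.posSemidef.sqrt)⁻¹ * v x) * Y * ((hβ.posSemidef.sqrt)⁻¹ * v x)ᴴ) *
        (hα.posSemidef.sqrt * u (-x))ᴴ)
    -- Rxstar is the Hilbert–Schmidt adjoint of Rx
    (Rxstar : Matrix (Fin n) (Fin n) ℂ →ₗ[ℂ] Matrix (Fin m) (Fin m) ℂ)
    (hadjRx : ∀ (Y : Matrix (Fin m) (Fin m) ℂ) (X : Matrix (Fin n) (Fin n) ℂ),
      ((Rxstar X)ᴴ * Y).trace = (Xᴴ * Rx Y).trace) :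
    -- the rotated Petz map at parameter y of (β, Rx) equals Ad_{β^{-i(x+y)}} ∘ E ∘ Ad_{α^{i(x+y)}}
    ∀ X : Matrix (Fin n) (Fin n) ℂ,
      (hβ.posSemidef.sqrt * v (-y)) *
          Rxstar (((hα.posSemidef.sqrt)⁻¹ * u y) * X * ((hα.posSemidef.sqrt)⁻¹ * u y)ᴴ) *
        (hβ.posSemidef.sqrt * v (-y))ᴴ
      = v (-(x + y)) * E (u (x + y) * X * u (-(x + y))) * v (x + y) := by
  intro X
  have hsaH : (hα.posSemidef.sqrt)ᴴ = hα.posSemidef.sqrt := (hα.posSemidef.posSemidef_sqrt).1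
  have hsbH : (hβ.posSemidef.sqrt)ᴴ = hβ.posSemidef.sqrt := (hβ.posSemidef.posSemidef_sqrt).1
  have hsadet : IsUnit (hα.posSemidef.sqrt).det := by
    have h1 : hα.posSemidef.sqrt * hα.posSemidef.sqrt = α := hα.posSemidef.sqrt_mul_self
    have h2 : α.det ≠ 0 := ne_of_gt hα.det_pos
    rw [isUnit_iff_ne_zero]
    intro h0
    exact h2 (by rw [← h1, Matrix.det_mul, h0, mul_zero])
  have hsbdet : IsUnit (hβ.posSemidef.sqrt).det := by
    have h1 : hβ.posSemidef.sqrt * hβ.posSemidef.sqrt = E α := hβ.posSemidef.sqrt_mul_self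
    have h2 : (E α).det ≠ 0 := ne_of_gt hβ.det_pos
    rw [isUnit_iff_ne_zero]
    intro h0
    exact h2 (by rw [← h1, Matrix.det_mul, h0, mul_zero])
  have hsainv : hα.posSemidef.sqrt * (hα.posSemidef.sqrt)⁻¹ = 1 :=
    Matrix.mul_nonsing_inv _ hsadet
  have hsbinv : hβ.posSemidef.sqrt * (hβ.posSemidef.sqrt)⁻¹ = 1 :=
    Matrix.mul_nonsing_inv _ hsbdet
  have hsbinvmul : (hβ.posSemidef.sqrt)⁻¹ * hβ.posSemidef.sqrt = 1 :=
    Matrix.nonsing_inv_mul _ hsbdet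
  have hsbinvH : ((hβ.posSemidef.sqrt)⁻¹)ᴴ = (hβ.posSemidef.sqrt)⁻¹ := by
    rw [Matrix.conjTranspose_nonsing_inv, hsbH]
  have hsainvH : ((hα.posSemidef.sqrt)⁻¹)ᴴ = (hα.posSemidef.sqrt)⁻¹ := by
    rw [Matrix.conjTranspose_nonsing_inv, hsaH]
  -- abbreviations (plain lets via obtain to avoid delta-unfolding issues)
  obtain ⟨A, hA⟩ : ∃ A, A = hα.posSemidef.sqrt * u (-x) := ⟨_, rfl⟩
  obtain ⟨B, hB⟩ : ∃ B, B = (hβ.posSemidef.sqrt)⁻¹ * v x := ⟨_, rfl⟩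
  obtain ⟨C, hC⟩ : ∃ C, C = hβ.posSemidef.sqrt * v (-y) := ⟨_, rfl⟩
  obtain ⟨D, hD⟩ : ∃ D, D = (hα.posSemidef.sqrt)⁻¹ * u y := ⟨_, rfl⟩
  -- explicit formula for Rxstar
  have hRx' : ∀ Y, Rx Y = A * Estar (B * Y * Bᴴ) * Aᴴ := by
    intro Y; rw [hRx, hA, hB]
  have hRxstar : ∀ W, Rxstar W = Bᴴ * E (Aᴴ * W * A) * B := by
    intro W
    apply trace_ext'
    intro Y
    rw [hadjRx, hRx']
    calc (Wᴴ * (A * Estar (B * Y * Bᴴ) * Aᴴ)).trace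
        = ((Aᴴ * W * A)ᴴ * Estar (B * Y * Bᴴ)).trace := sandwich_trace W A _
      _ = star (((Estar (B * Y * Bᴴ))ᴴ * (Aᴴ * W * A)).trace) := trace_flip _ _
      _ = star (((B * Y * Bᴴ)ᴴ * E (Aᴴ * W * A)).trace) := congrArg star (hadj _ _)
      _ = ((E (Aᴴ * W * A))ᴴ * (B * Y * Bᴴ)).trace := (trace_flip _ _).symm
      _ = ((Bᴴ * E (Aᴴ * W * A) * B)ᴴ * Y).trace := sandwich_trace _ B Y
  -- key products
  have hAD : Aᴴ * D = u (x + y) := by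
    rw [hA, hD, Matrix.conjTranspose_mul, hustar, neg_neg, hsaH]
    calc u x * hα.posSemidef.sqrt * ((hα.posSemidef.sqrt)⁻¹ * u y)
        = u x * (hα.posSemidef.sqrt * (hα.posSemidef.sqrt)⁻¹) * u y := by noncomm_ring
      _ = u x * u y := by rw [hsainv, mul_one]
      _ = u (x + y) := (huadd x y).symm
  have hDA : Dᴴ * A = u (-(x + y)) := by
    have h1 : Dᴴ * A = (Aᴴ * D)ᴴ := by
      rw [Matrix.conjTranspose_mul, Matrix.conjTranspose_conjTranspose]
    rw [h1, hAD, hustar]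
  have hCB : C * Bᴴ = v (-(x + y)) := by
    rw [hC, hB, Matrix.conjTranspose_mul, hvstar, hsbinvH]
    calc hβ.posSemidef.sqrt * v (-y) * (v (-x) * (hβ.posSemidef.sqrt)⁻¹)
        = hβ.posSemidef.sqrt * (v (-y) * v (-x)) * (hβ.posSemidef.sqrt)⁻¹ := by noncomm_ring
      _ = hβ.posSemidef.sqrt * v (-y + -x) * (hβ.posSemidef.sqrt)⁻¹ := by rw [hvadd]
      _ = v (-y + -x) * hβ.posSemidef.sqrt * (hβ.posSemidef.sqrt)⁻¹ := by rw [hvcomm]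
      _ = v (-y + -x) := by rw [mul_assoc, hsbinv, mul_one]
      _ = v (-(x + y)) := by rw [show -y + -x = -(x + y) by ring]
  have hBC : B * Cᴴ = v (x + y) := by
    have h1 : B * Cᴴ = (C * Bᴴ)ᴴ := by
      rw [Matrix.conjTranspose_mul, Matrix.conjTranspose_conjTranspose]
    rw [h1, hCB, hvstar, neg_neg]
  -- put everything together
  have hgoalLHS :
      (hβ.posSemidef.sqrt * v (-y)) *
          Rxstar (((hα.posSemidef.sqrt)⁻¹ * u y) * X * ((hα.posSemidef.sqrt)⁻¹ * u y)ᴴ) *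
        (hβ.posSemidef.sqrt * v (-y))ᴴ
      = C * Rxstar (D * X * Dᴴ) * Cᴴ := by rw [hC, hD]
  rw [hgoalLHS, hRxstar]
  have harg : Aᴴ * (D * X * Dᴴ) * A = u (x + y) * X * u (-(x + y)) := by
    calc Aᴴ * (D * X * Dᴴ) * A = (Aᴴ * D) * X * (Dᴴ * A) := by noncomm_ring
      _ = u (x + y) * X * u (-(x + y)) := by rw [hAD, hDA]
  rw [harg]
  calc C * (Bᴴ * E (u (x + y) * X * u (-(x + y))) * B) * Cᴴ
      = (C * Bᴴ) * E (u (x + y) * X * u (-(x + y))) * (B * Cᴴ) := by noncomm_ring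
    _ = v (-(x + y)) * E (u (x + y) * X * u (-(x + y))) * v (x + y) := by rw [hCB, hBC]
end

section
/- The rotated Petz map for t ≠ 0 is not involutive in general: there exist a positive definite density matrix α on M₂(ℂ), a CPTP map E : M₂(ℂ) → M₂(ℂ) (a convex combination of the identity and conjugation by the Pauli matrix σ_x) with β = E(α) positive definite, such that for every nonzero t ∈ ℝ, Ad_{β^{-2it}} ∘ E ∘ Ad_{α^{2it}} ≠ E. Concretely, with α = diag(θ, 1-θ) for θ = 1/(1+e^{π(√2+1)/2}), p = sinh(π/2)/(sinh(π/2)+sinh(π/√2)), and E = (1-p)·id + p·Ad_{σ_x}, the equality β^{-2it} E(α^{2it} X α^{-2it}) β^{2it} = E(X) for all X ∈ M₂(ℂ) holds only when t = 0. -/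
open Matrix ComplexOrder

noncomputable section

/-- The Pauli matrix σ_x. -/
def sigmaX : Matrix (Fin 2) (Fin 2) ℂ := !![0, 1; 1, 0]

/-- For `α = diag(a, 1-a)` with `0 < a < 1`, the complex power
`α^z = diag(a^z, (1-a)^z)`, where `a^z = exp(z ln a)`. -/
def dpow (a : ℝ) (z : ℂ) : Matrix (Fin 2) (Fin 2) ℂ :=
  Matrix.diagonal ![Complex.exp (z * Real.log a), Complex.exp (z * Real.log (1 - a))]

/-- θ = 1/(1 + e^{π(√2+1)/2}). -/
def theta0 : ℝ := 1 / (1 + Real.exp (Real.pi * (Real.sqrt 2 + 1) / 2))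

/-- p = sinh(π/2)/(sinh(π/2) + sinh(π/√2)). -/
def pflip : ℝ :=
  Real.sinh (Real.pi / 2) / (Real.sinh (Real.pi / 2) + Real.sinh (Real.pi / Real.sqrt 2))

/-- φ = (1-p)θ + p(1-θ), so that β = diag(φ, 1-φ) = E(α). -/
def phi0 : ℝ := (1 - pflip) * theta0 + pflip * (1 - theta0)

/-- The bit-flip channel E = (1-p)·id + p·Ad_{σ_x}. -/
def Emap (X : Matrix (Fin 2) (Fin 2) ℂ) : Matrix (Fin 2) (Fin 2) ℂ :=
  ((1 : ℂ) - (pflip : ℝ)) • X + ((pflip : ℝ) : ℂ) • (sigmaX * X * sigmaX)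

/-! ### Auxiliary real-analysis lemmas -/

lemma sqrt2_pos : 0 < Real.sqrt 2 := Real.sqrt_pos.mpr (by norm_num)
lemma sqrt2_sq : Real.sqrt 2 * Real.sqrt 2 = 2 := Real.mul_self_sqrt (by norm_num)

lemma pflip_pos : 0 < pflip := by
  have h1 : 0 < Real.sinh (Real.pi / 2) := Real.sinh_pos_iff.mpr (by positivity)
  have h2 : 0 < Real.sinh (Real.pi / Real.sqrt 2) := Real.sinh_pos_iff.mpr
    (by have := sqrt2_pos; positivity)
  exact div_pos h1 (by linarith)

lemma pflip_lt_one : pflip < 1 := by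
  have h1 : 0 < Real.sinh (Real.pi / 2) := Real.sinh_pos_iff.mpr (by positivity)
  have h2 : 0 < Real.sinh (Real.pi / Real.sqrt 2) := Real.sinh_pos_iff.mpr
    (by have := sqrt2_pos; positivity)
  rw [pflip, div_lt_one (by linarith)]; linarith

lemma frac_pos (c : ℝ) : 0 < 1 / (1 + Real.exp c) := by positivity
lemma frac_lt_one (c : ℝ) : 1 / (1 + Real.exp c) < 1 := by
  rw [div_lt_one (by positivity)]
  have := Real.exp_pos c; linarith

lemma theta0_pos : 0 < theta0 := frac_pos _
lemma theta0_lt_one : theta0 < 1 := frac_lt_one _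

lemma log_frac (c : ℝ) :
    Real.log (1 / (1 + Real.exp c)) - Real.log (1 - 1 / (1 + Real.exp c)) = -c := by
  have he : 0 < Real.exp c := Real.exp_pos c
  have hd : (0:ℝ) < 1 + Real.exp c := by linarith
  have h2 : 1 - 1 / (1 + Real.exp c) = Real.exp c / (1 + Real.exp c) := by
    field_simp
    ring
  rw [h2, Real.log_div (by positivity) (by positivity),
    Real.log_div (by positivity) (by positivity), Real.log_one, Real.log_exp]
  ring

lemma sinh_eq' (t : ℝ) : Real.sinh t = (Real.exp t * Real.exp t - 1) / (2 * Real.exp t) := by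
  have h := (Real.exp_pos t).ne'
  rw [Real.sinh_eq, Real.exp_neg, div_eq_div_iff (by norm_num) (by positivity)]
  field_simp

lemma phi0_eq : phi0 = 1 / (1 + Real.exp (Real.pi * (Real.sqrt 2 - 1) / 2)) := by
  have hs := sqrt2_sq
  have hsp := sqrt2_pos
  have h1 : Real.pi * (Real.sqrt 2 + 1) / 2 = Real.pi / Real.sqrt 2 + Real.pi / 2 := by
    field_simp; nlinarith [Real.pi_pos]
  have h2 : Real.pi * (Real.sqrt 2 - 1) / 2 = Real.pi / Real.sqrt 2 - Real.pi / 2 := by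
    field_simp; nlinarith [Real.pi_pos]
  set x := Real.exp (Real.pi / 2) with hxdef
  set y := Real.exp (Real.pi / Real.sqrt 2) with hydef
  have hx : 1 < x := Real.one_lt_exp_iff.mpr (by positivity)
  have hy : 1 < y := Real.one_lt_exp_iff.mpr (by positivity)
  have hx0 : (0:ℝ) < x := by linarith
  have hy0 : (0:ℝ) < y := by linarith
  have e1 : Real.exp (Real.pi * (Real.sqrt 2 + 1) / 2) = y * x := by
    rw [h1, Real.exp_add]
  have e2 : Real.exp (Real.pi * (Real.sqrt 2 - 1) / 2) = y / x := by
    rw [h2, Real.exp_sub]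
  have hA : (0:ℝ) < x * x - 1 := by nlinarith
  have hB : (0:ℝ) < y * y - 1 := by nlinarith
  have hD : (0:ℝ) < (x * x - 1) * y + (y * y - 1) * x := by positivity
  have s1 : Real.sinh (Real.pi / 2) = (x * x - 1) / (2 * x) := sinh_eq' _
  have s2 : Real.sinh (Real.pi / Real.sqrt 2) = (y * y - 1) / (2 * y) := sinh_eq' _
  have hsum : (x*x-1)/(2*x) + (y*y-1)/(2*y) ≠ 0 := by positivity
  have hp : pflip = (x * x - 1) * y / ((x * x - 1) * y + (y * y - 1) * x) := by
    rw [pflip, s1, s2, div_eq_div_iff (by positivity) (ne_of_gt hD)]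
    field_simp
  rw [phi0, theta0, hp, e1, e2]
  have hyx : (0:ℝ) < 1 + y * x := by positivity
  have hyx2 : (0:ℝ) < 1 + y / x := by positivity
  have h1' : ((x*x-1)*y + (y*y-1)*x) ≠ 0 := ne_of_gt hD
  have h2' : (1 + y*x) ≠ 0 := by positivity
  have h3' : (1 + y/x) ≠ 0 := by positivity
  have hx' : x ≠ 0 := ne_of_gt hx0
  have h4' : (x ^ 2 - 1) * y + x * (y ^ 2 - 1) ≠ 0 := by
    intro h0; apply h1'; linear_combination h0
  field_simp
  ring

lemma phi0_pos : 0 < phi0 := phi0_eq ▸ frac_pos _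
lemma phi0_lt_one : phi0 < 1 := phi0_eq ▸ frac_lt_one _

lemma log_theta0 :
    Real.log theta0 - Real.log (1 - theta0) = -(Real.pi * (Real.sqrt 2 + 1) / 2) :=
  log_frac _

lemma log_phi0 :
    Real.log phi0 - Real.log (1 - phi0) = -(Real.pi * (Real.sqrt 2 - 1) / 2) := by
  rw [phi0_eq]; exact log_frac _

/-! ### Auxiliary complex/matrix lemmas -/

lemma exp_combo (z la l1a lb l1b p : ℂ) (hp : p ≠ 0)
    (h : Complex.exp (-(z * lb)) * (p * (Complex.exp (z * la) * Complex.exp (-(z * l1a)))) *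
      Complex.exp (z * l1b) = p) :
    Complex.exp (z * (la - l1a - lb + l1b)) = 1 := by
  have h' : Complex.exp (z * (la - l1a - lb + l1b)) * p = 1 * p := by
    rw [show z * (la - l1a - lb + l1b) = (-(z * lb)) + (z * la + -(z * l1a)) + z * l1b by ring,
      Complex.exp_add, Complex.exp_add, Complex.exp_add]
    linear_combination h
  exact mul_right_cancel₀ hp h'

lemma dpow_zero (a : ℝ) : dpow a 0 = 1 := by
  ext i j
  fin_cases i <;> fin_cases j <;>
    simp [dpow, Matrix.diagonal, Matrix.one_apply]

/-- Extract `t ∈ ℤ`-type information from `exp (2·I·t·r) = 1`. -/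
lemma exp_two_I_eq_one {t r : ℝ}
    (h : Complex.exp (2 * Complex.I * (t : ℂ) * (r : ℂ)) = 1) :
    ∃ n : ℤ, t * r = n * Real.pi := by
  obtain ⟨n, hn⟩ := Complex.exp_eq_one_iff.mp h
  refine ⟨n, ?_⟩
  have h2 : ((2 * (t * r) : ℝ) : ℂ) * Complex.I = ((2 * (n * Real.pi) : ℝ) : ℂ) * Complex.I := by
    push_cast
    linear_combination hn
  have h3 := mul_right_cancel₀ Complex.I_ne_zero h2
  have h4 := Complex.ofReal_inj.mp h3
  linarith

/-- with α = diag(θ, 1-θ), β = E(α) = diag(φ, 1-φ) for the bit-flip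
channel E with the stated values of θ and p, the identity
`Ad_{β^{-2it}} ∘ E ∘ Ad_{α^{2it}} = E` holds if and only if t = 0.  In particular the
rotated Petz map at parameter t ≠ 0 is not involutive on E. -/
theorem rotated_petz_not_involutive :
    (Matrix.diagonal ![(theta0 : ℂ), 1 - (theta0 : ℝ)]).PosDef ∧
    Emap (Matrix.diagonal ![(theta0 : ℂ), 1 - (theta0 : ℝ)])
      = Matrix.diagonal ![(phi0 : ℂ), 1 - (phi0 : ℝ)] ∧
    (Matrix.diagonal ![(phi0 : ℂ), 1 - (phi0 : ℝ)]).PosDef ∧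
    ∀ t : ℝ,
      (∀ X : Matrix (Fin 2) (Fin 2) ℂ,
        dpow phi0 (-(2 * Complex.I * (t : ℂ))) *
            Emap (dpow theta0 (2 * Complex.I * (t : ℂ)) * X *
              dpow theta0 (-(2 * Complex.I * (t : ℂ)))) *
          dpow phi0 (2 * Complex.I * (t : ℂ)) = Emap X)
      ↔ t = 0 := by
  have hθ0 := theta0_pos
  have hθ1 := theta0_lt_one
  have hφ0 := phi0_pos
  have hφ1 := phi0_lt_one
  have hp0 := pflip_pos
  have hp1 := pflip_lt_one
  refine ⟨?_, ?_, ?_, ?_⟩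
  · refine Matrix.posDef_diagonal_iff.mpr fun i => ?_
    fin_cases i <;>
      simp only [Matrix.cons_val_zero, Matrix.cons_val_one, Matrix.head_cons, Fin.mk_one,
        Fin.zero_eta, Fin.isValue, Matrix.cons_val', Matrix.empty_val'] <;>
      first
      | (rw [Complex.zero_lt_real]; linarith)
      | (rw [show (1 : ℂ) - (theta0 : ℝ) = ((1 - theta0 : ℝ) : ℂ) by push_cast; ring,
          Complex.zero_lt_real]; linarith)
  · have hdiag : ∀ (a b : ℂ), Matrix.diagonal ![a, b] = !![a, 0; 0, b] := by
      intro a b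
      ext i j
      fin_cases i <;> fin_cases j <;> simp [Matrix.diagonal]
    rw [hdiag, hdiag]
    ext i j
    fin_cases i <;> fin_cases j <;>
      simp [Emap, sigmaX, Matrix.mul_apply, Fin.sum_univ_two, phi0] <;>
      push_cast <;> ring
  · refine Matrix.posDef_diagonal_iff.mpr fun i => ?_
    fin_cases i <;>
      simp only [Matrix.cons_val_zero, Matrix.cons_val_one, Matrix.head_cons, Fin.mk_one,
        Fin.zero_eta, Fin.isValue, Matrix.cons_val', Matrix.empty_val'] <;>
      first
      | (rw [Complex.zero_lt_real]; linarith)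
      | (rw [show (1 : ℂ) - (phi0 : ℝ) = ((1 - phi0 : ℝ) : ℂ) by push_cast; ring,
          Complex.zero_lt_real]; linarith)
  · intro t
    constructor
    · intro h
      by_contra ht
      -- use the test matrix X = !![0,1;0,0]
      have hX := h !![0,1;0,0]
      have h01 := congrFun (congrFun hX 0) 1
      have h10 := congrFun (congrFun hX 1) 0
      simp [Emap, dpow, sigmaX, Matrix.mul_apply, Fin.sum_univ_two, Matrix.diagonal,
        Matrix.vecMul, dotProduct] at h01 h10
      set z : ℂ := 2 * Complex.I * (t : ℂ) with hz
      have hpne : ((pflip : ℝ) : ℂ) ≠ 0 := Complex.ofReal_ne_zero.mpr (ne_of_gt hp0)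
      have hpne' : (1 : ℂ) - ((pflip : ℝ) : ℂ) ≠ 0 := by
        rw [show (1 : ℂ) - ((pflip : ℝ) : ℂ) = ((1 - pflip : ℝ) : ℂ) by push_cast; ring]
        exact Complex.ofReal_ne_zero.mpr (ne_of_gt (by linarith : (0:ℝ) < 1 - pflip))
      -- combine exponentials
      have e1 : Complex.exp (z * ((Real.log theta0 : ℂ) - (Real.log (1 - theta0) : ℂ)
          - (Real.log phi0 : ℂ) + (Real.log (1 - phi0) : ℂ))) = 1 :=
        exp_combo z _ _ _ _ _ hpne' h01
      have e2 : Complex.exp (z * ((Real.log theta0 : ℂ) - (Real.log (1 - theta0) : ℂ)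
          - (Real.log (1 - phi0) : ℂ) + (Real.log phi0 : ℂ))) = 1 :=
        exp_combo z _ _ _ _ _ hpne h10
      -- rewrite the exponents using the explicit log values
      have key1 : Complex.exp (2 * Complex.I * (t : ℂ) *
          (((Real.log theta0 - Real.log (1 - theta0)) -
            (Real.log phi0 - Real.log (1 - phi0)) : ℝ) : ℂ)) = 1 := by
        rw [← e1, hz]; congr 1; push_cast; ring
      have key2 : Complex.exp (2 * Complex.I * (t : ℂ) *
          (((Real.log theta0 - Real.log (1 - theta0)) +
            (Real.log phi0 - Real.log (1 - phi0)) : ℝ) : ℂ)) = 1 := by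
        rw [← e2, hz]; congr 1; push_cast; ring
      rw [log_theta0, log_phi0] at key1 key2
      have harg1 : -(Real.pi * (Real.sqrt 2 + 1) / 2) - -(Real.pi * (Real.sqrt 2 - 1) / 2)
          = -Real.pi := by ring
      have harg2 : -(Real.pi * (Real.sqrt 2 + 1) / 2) + -(Real.pi * (Real.sqrt 2 - 1) / 2)
          = -(Real.sqrt 2 * Real.pi) := by ring
      rw [harg1] at key1
      rw [harg2] at key2
      obtain ⟨k, hk⟩ := exp_two_I_eq_one key1
      obtain ⟨m, hm⟩ := exp_two_I_eq_one key2
      have hπ := Real.pi_pos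
      -- from hk : t * (-π) = k π, get t = -k
      have ht1 : t = -(k : ℝ) := by
        have : (-t) * Real.pi = (k : ℝ) * Real.pi := by linarith [hk]; 
        have := mul_right_cancel₀ (ne_of_gt hπ) this
        linarith
      have ht2 : Real.sqrt 2 * t = -(m : ℝ) := by
        have h' : (-(Real.sqrt 2 * t)) * Real.pi = (m : ℝ) * Real.pi := by
          have := hm; nlinarith [hm]
        have := mul_right_cancel₀ (ne_of_gt hπ) h'
        linarith
      have hk0 : (k : ℝ) ≠ 0 := by
        intro h0
        apply ht
        rw [ht1, h0, neg_zero]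
      have hsqrt : Real.sqrt 2 = (m : ℝ) / (k : ℝ) := by
        rw [ht1] at ht2
        field_simp
        linarith [ht2]
      exact irrational_sqrt_two ⟨(m : ℚ) / (k : ℚ), by push_cast; rw [hsqrt]⟩
    · intro h
      subst h
      intro X
      push_cast
      simp only [mul_zero, neg_zero, dpow_zero, one_mul, mul_one]

end
end

section
/- Compositionality plus tensor-stabilization implies tensoriality: let R be a retrodiction assignment on matrix algebras (assigning to each positive definite density matrix α and CPTP map E with E(α) positive definite a CPTP map R_{α,E} with R_{α,E}(E(α)) = α) that is (i) normalizing: R_{α,id} = id; (ii) compositional: R_{α, F∘E} = R_{α,E} ∘ R_{E(α),F}; and (iii) stabilizing with respect to identities: R_{α⊗γ, E⊗id} = R_{α,E} ⊗ R_{γ,id} and R_{γ⊗α, id⊗E} = R_{γ,id} ⊗ R_{α,E}. Then R is tensorial: R_{α⊗α', E⊗E'} = R_{α,E} ⊗ R_{α',E'} for all pairs. -/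
open Matrix ComplexOrder Kronecker

/-- `T` is the tensor product `E ⊗ E'` of two linear maps between matrix algebras:
it is determined by its values on Kronecker products. -/
def IsTensorOf {A A' B B' : Type*} [Fintype A] [Fintype A'] [Fintype B] [Fintype B']
    (T : Matrix (A × A') (A × A') ℂ →ₗ[ℂ] Matrix (B × B') (B × B') ℂ)
    (E : Matrix A A ℂ →ₗ[ℂ] Matrix B B ℂ)
    (E' : Matrix A' A' ℂ →ₗ[ℂ] Matrix B' B' ℂ) : Prop :=
  ∀ (X : Matrix A A ℂ) (X' : Matrix A' A' ℂ), T (X ⊗ₖ X') = E X ⊗ₖ E' X'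

section Aux

variable {A A' B B' C : Type*} [Fintype A] [Fintype A'] [Fintype B] [Fintype B'] [Fintype C]

lemma tensor_unique {T S : Matrix (A × A') (A × A') ℂ →ₗ[ℂ] Matrix (B × B') (B × B') ℂ}
    {E : Matrix A A ℂ →ₗ[ℂ] Matrix B B ℂ} {E' : Matrix A' A' ℂ →ₗ[ℂ] Matrix B' B' ℂ}
    (hT : IsTensorOf T E E') (hS : IsTensorOf S E E') : T = S := by
  classical
  apply Module.Basis.ext (Matrix.stdBasis ℂ (A × A') (A × A'))
  rintro ⟨⟨a, a'⟩, b, b'⟩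
  rw [Matrix.stdBasis_eq_single]
  have key : single (a, a') (b, b') (1 : ℂ)
      = single a b 1 ⊗ₖ single a' b' 1 := by
    ext ⟨i, i'⟩ ⟨j, j'⟩
    simp only [single, of_apply, kroneckerMap_apply, Prod.mk.injEq]
    by_cases h1 : a = i <;> by_cases h2 : b = j <;> by_cases h3 : a' = i' <;>
      by_cases h4 : b' = j' <;> simp [h1, h2, h3, h4]
  rw [key, hT, hS]

/-- `Φ ⊗ id_C` -/
def tenR (Φ : Matrix A A ℂ →ₗ[ℂ] Matrix B B ℂ) :
    Matrix (A × C) (A × C) ℂ →ₗ[ℂ] Matrix (B × C) (B × C) ℂ where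
  toFun M := Matrix.of fun p q => Φ (Matrix.of fun a b => M (a, p.2) (b, q.2)) p.1 q.1
  map_add' M N := by
    ext p q
    have h : (Matrix.of fun a b => (M + N) (a, p.2) (b, q.2)) =
        (Matrix.of fun a b => M (a, p.2) (b, q.2)) +
        (Matrix.of fun a b => N (a, p.2) (b, q.2)) := rfl
    show Φ (Matrix.of fun a b => (M + N) (a, p.2) (b, q.2)) p.1 q.1 = _
    rw [h, map_add]; rfl
  map_smul' c M := by
    ext p q
    have h : (Matrix.of fun a b => (c • M) (a, p.2) (b, q.2)) =
        c • (Matrix.of fun a b => M (a, p.2) (b, q.2)) := rfl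
    show Φ (Matrix.of fun a b => (c • M) (a, p.2) (b, q.2)) p.1 q.1 = _
    rw [h, _root_.map_smul]; simp

/-- `id_C ⊗ Ψ` -/
def tenL (Ψ : Matrix A A ℂ →ₗ[ℂ] Matrix B B ℂ) :
    Matrix (C × A) (C × A) ℂ →ₗ[ℂ] Matrix (C × B) (C × B) ℂ where
  toFun M := Matrix.of fun p q => Ψ (Matrix.of fun a b => M (p.1, a) (q.1, b)) p.2 q.2
  map_add' M N := by
    ext p q
    have h : (Matrix.of fun a b => (M + N) (p.1, a) (q.1, b)) =
        (Matrix.of fun a b => M (p.1, a) (q.1, b)) +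
        (Matrix.of fun a b => N (p.1, a) (q.1, b)) := rfl
    show Ψ (Matrix.of fun a b => (M + N) (p.1, a) (q.1, b)) p.2 q.2 = _
    rw [h, map_add]; rfl
  map_smul' c M := by
    ext p q
    have h : (Matrix.of fun a b => (c • M) (p.1, a) (q.1, b)) =
        c • (Matrix.of fun a b => M (p.1, a) (q.1, b)) := rfl
    show Ψ (Matrix.of fun a b => (c • M) (p.1, a) (q.1, b)) p.2 q.2 = _
    rw [h, _root_.map_smul]; simp

lemma isTensorOf_tenR (Φ : Matrix A A ℂ →ₗ[ℂ] Matrix B B ℂ) :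
    IsTensorOf (tenR (C := C) Φ) Φ LinearMap.id := by
  intro X X'
  ext ⟨b, c⟩ ⟨b', c'⟩
  show Φ (Matrix.of fun a a2 => (X ⊗ₖ X') (a, c) (a2, c')) b b'
      = (Φ X ⊗ₖ (LinearMap.id X')) (b, c) (b', c')
  have h : (Matrix.of fun a a2 => (X ⊗ₖ X') (a, c) (a2, c')) = X' c c' • X := by
    ext a a2; simp [mul_comm]
  rw [h, _root_.map_smul]
  simp [mul_comm]

lemma isTensorOf_tenL (Ψ : Matrix A A ℂ →ₗ[ℂ] Matrix B B ℂ) :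
    IsTensorOf (tenL (C := C) Ψ) LinearMap.id Ψ := by
  intro X X'
  ext ⟨c, b⟩ ⟨c', b'⟩
  show Ψ (Matrix.of fun a a2 => (X ⊗ₖ X') (c, a) (c', a2)) b b'
      = ((LinearMap.id X) ⊗ₖ Ψ X') (c, b) (c', b')
  have h : (Matrix.of fun a a2 => (X ⊗ₖ X') (c, a) (c', a2)) = X c c' • X' := by
    ext a a2; simp
  rw [h, _root_.map_smul]
  simp

lemma isCP_tenR {Φ : Matrix A A ℂ →ₗ[ℂ] Matrix B B ℂ} (hΦ : IsCP Φ) :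
    IsCP (tenR (C := C) Φ) := by
  classical
  intro k M hM
  set n := Fintype.card C with hn
  let e2 : Fin k × C ≃ Fin (k * n) :=
    (Equiv.prodCongr (Equiv.refl (Fin k)) (Fintype.equivFin C)).trans finProdFinEquiv
  set f : Fin (k * n) × A → Fin k × (A × C) :=
    fun ia => ((e2.symm ia.1).1, (ia.2, (e2.symm ia.1).2)) with hf
  have h2 := hΦ (k * n) (M.submatrix f f) (hM.submatrix f)
  set g : Fin k × (B × C) → Fin (k * n) × B :=
    fun p => (e2 (p.1, p.2.2), p.2.1) with hg
  have key : (Matrix.of fun p q : Fin k × (B × C) =>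
      (tenR (C := C) Φ) (Matrix.of fun x y => M (p.1, x) (q.1, y)) p.2 q.2)
      = (Matrix.of fun p q : Fin (k * n) × B =>
          Φ (Matrix.of fun a b => (M.submatrix f f) (p.1, a) (q.1, b)) p.2 q.2).submatrix g g := by
    ext p q
    show Φ (Matrix.of fun a b => M (p.1, (a, p.2.2)) (q.1, (b, q.2.2))) p.2.1 q.2.1
      = Φ (Matrix.of fun a b =>
          (M.submatrix f f) (e2 (p.1, p.2.2), a) (e2 (q.1, q.2.2), b)) p.2.1 q.2.1
    have h : (Matrix.of fun a b => M (p.1, (a, p.2.2)) (q.1, (b, q.2.2)))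
        = (Matrix.of fun a b =>
          (M.submatrix f f) (e2 (p.1, p.2.2), a) (e2 (q.1, q.2.2), b)) := by
      ext a b
      simp [hf, submatrix_apply, Equiv.symm_apply_apply]
    rw [h]
  rw [key]
  exact h2.submatrix g

lemma isCP_tenL {Ψ : Matrix A A ℂ →ₗ[ℂ] Matrix B B ℂ} (hΨ : IsCP Ψ) :
    IsCP (tenL (C := C) Ψ) := by
  classical
  intro k M hM
  set n := Fintype.card C with hn
  let e2 : Fin k × C ≃ Fin (k * n) :=
    (Equiv.prodCongr (Equiv.refl (Fin k)) (Fintype.equivFin C)).trans finProdFinEquiv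
  set f : Fin (k * n) × A → Fin k × (C × A) :=
    fun ia => ((e2.symm ia.1).1, ((e2.symm ia.1).2, ia.2)) with hf
  have h2 := hΨ (k * n) (M.submatrix f f) (hM.submatrix f)
  set g : Fin k × (C × B) → Fin (k * n) × B :=
    fun p => (e2 (p.1, p.2.1), p.2.2) with hg
  have key : (Matrix.of fun p q : Fin k × (C × B) =>
      (tenL (C := C) Ψ) (Matrix.of fun x y => M (p.1, x) (q.1, y)) p.2 q.2)
      = (Matrix.of fun p q : Fin (k * n) × B =>
          Ψ (Matrix.of fun a b => (M.submatrix f f) (p.1, a) (q.1, b)) p.2 q.2).submatrix g g := by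
    ext p q
    show Ψ (Matrix.of fun a b => M (p.1, (p.2.1, a)) (q.1, (q.2.1, b))) p.2.2 q.2.2
      = Ψ (Matrix.of fun a b =>
          (M.submatrix f f) (e2 (p.1, p.2.1), a) (e2 (q.1, q.2.1), b)) p.2.2 q.2.2
    have h : (Matrix.of fun a b => M (p.1, (p.2.1, a)) (q.1, (q.2.1, b)))
        = (Matrix.of fun a b =>
          (M.submatrix f f) (e2 (p.1, p.2.1), a) (e2 (q.1, q.2.1), b)) := by
      ext a b
      simp [hf, submatrix_apply, Equiv.symm_apply_apply]
    rw [h]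
  rw [key]
  exact h2.submatrix g

lemma trace_tenR {Φ : Matrix A A ℂ →ₗ[ℂ] Matrix B B ℂ}
    (hΦ : ∀ X, (Φ X).trace = X.trace) (M : Matrix (A × C) (A × C) ℂ) :
    ((tenR (C := C) Φ) M).trace = M.trace := by
  have h : ∀ c : C, (∑ b : B, Φ (Matrix.of fun a a2 => M (a, c) (a2, c)) b b)
      = ∑ a : A, M (a, c) (a, c) := fun c => by
    simpa [Matrix.trace, Matrix.diag] using hΦ (Matrix.of fun a a2 => M (a, c) (a2, c))
  calc ((tenR (C := C) Φ) M).trace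
      = ∑ b : B, ∑ c : C, Φ (Matrix.of fun a a2 => M (a, c) (a2, c)) b b := by
        simp [Matrix.trace, Matrix.diag, tenR, Fintype.sum_prod_type]
    _ = ∑ c : C, ∑ b : B, Φ (Matrix.of fun a a2 => M (a, c) (a2, c)) b b := by
        rw [Finset.sum_comm]
    _ = ∑ c : C, ∑ a : A, M (a, c) (a, c) := by simp [h]
    _ = M.trace := by
        rw [Finset.sum_comm]; simp [Matrix.trace, Matrix.diag, Fintype.sum_prod_type]

lemma trace_tenL {Ψ : Matrix A A ℂ →ₗ[ℂ] Matrix B B ℂ}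
    (hΨ : ∀ X, (Ψ X).trace = X.trace) (M : Matrix (C × A) (C × A) ℂ) :
    ((tenL (C := C) Ψ) M).trace = M.trace := by
  have h : ∀ c : C, (∑ b : B, Ψ (Matrix.of fun a a2 => M (c, a) (c, a2)) b b)
      = ∑ a : A, M (c, a) (c, a) := fun c => by
    simpa [Matrix.trace, Matrix.diag] using hΨ (Matrix.of fun a a2 => M (c, a) (c, a2))
  calc ((tenL (C := C) Ψ) M).trace
      = ∑ c : C, ∑ b : B, Ψ (Matrix.of fun a a2 => M (c, a) (c, a2)) b b := by
        simp [Matrix.trace, Matrix.diag, tenL, Fintype.sum_prod_type]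
    _ = ∑ c : C, ∑ a : A, M (c, a) (c, a) := by simp [h]
    _ = M.trace := by simp [Matrix.trace, Matrix.diag, Fintype.sum_prod_type]

lemma posDef_conjTranspose_mul_self' {m n : Type*} [Fintype m] [Fintype n]
    (Cm : Matrix m n ℂ) (h : Function.Injective Cm.mulVec) : (Cmᴴ * Cm).PosDef := by
  exact Matrix.PosDef.conjTranspose_mul_self Cm h

lemma posDef_kronecker {α : Matrix A A ℂ} {β : Matrix C C ℂ}
    (hα : α.PosDef) (hβ : β.PosDef) : (α ⊗ₖ β).PosDef := by
  classical
  obtain ⟨A₁, hA₁⟩ : ∃ A₁ : Matrix A A ℂ, α = A₁ᴴ * A₁ := by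
    open scoped MatrixOrder in exact CStarAlgebra.nonneg_iff_eq_star_mul_self.mp hα.posSemidef.nonneg
  obtain ⟨B₁, hB₁⟩ : ∃ B₁ : Matrix C C ℂ, β = B₁ᴴ * B₁ := by
    open scoped MatrixOrder in exact CStarAlgebra.nonneg_iff_eq_star_mul_self.mp hβ.posSemidef.nonneg
  have hconj : (A₁ ⊗ₖ B₁)ᴴ = A₁ᴴ ⊗ₖ B₁ᴴ := by
    ext ⟨i, j⟩ ⟨k, l⟩
    simp [conjTranspose_apply, kroneckerMap_apply, star_mul']
  have key : α ⊗ₖ β = (A₁ ⊗ₖ B₁)ᴴ * (A₁ ⊗ₖ B₁) := by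
    rw [hconj, ← mul_kronecker_mul, ← hA₁, ← hB₁]
  have hdA : A₁.det ≠ 0 := by
    intro hd
    have : α.det = 0 := by rw [hA₁, det_mul, hd, mul_zero]
    exact hα.det_pos.ne' this
  have hdB : B₁.det ≠ 0 := by
    intro hd
    have : β.det = 0 := by rw [hB₁, det_mul, hd, mul_zero]
    exact hβ.det_pos.ne' this
  have hdet : (A₁ ⊗ₖ B₁).det ≠ 0 := by
    rw [det_kronecker]
    exact mul_ne_zero (pow_ne_zero _ hdA) (pow_ne_zero _ hdB)
  have hinj : Function.Injective (A₁ ⊗ₖ B₁).mulVec :=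
    Matrix.mulVec_injective_iff_isUnit.mpr ((Matrix.isUnit_iff_isUnit_det _).mpr hdet.isUnit)
  rw [key]
  exact posDef_conjTranspose_mul_self' _ hinj

end Aux

/-- a retrodiction assignment on matrix algebras that is state-preserving,
normalizing, compositional, and stabilizing with respect to identities is tensorial. -/
theorem compositional_and_stabilizing_implies_tensorial
    (R : ∀ (A B : Type) [Fintype A] [Fintype B],
      Matrix A A ℂ → (Matrix A A ℂ →ₗ[ℂ] Matrix B B ℂ) →
      (Matrix B B ℂ →ₗ[ℂ] Matrix A A ℂ))
    -- R assigns CPTP maps and is state-preserving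
    (hRcptp : ∀ (A B : Type) [Fintype A] [Fintype B]
      (α : Matrix A A ℂ) (E : Matrix A A ℂ →ₗ[ℂ] Matrix B B ℂ),
      α.PosDef → α.trace = 1 → IsCP E → (∀ X, (E X).trace = X.trace) → (E α).PosDef →
      (IsCP (R A B α E) ∧ (∀ Y, ((R A B α E) Y).trace = Y.trace) ∧
        (R A B α E) (E α) = α))
    -- (i) normalization: R_{α,id} = id
    (hnorm : ∀ (A : Type) [Fintype A] (α : Matrix A A ℂ),
      α.PosDef → α.trace = 1 → R A A α LinearMap.id = LinearMap.id)
    -- (ii) compositionality: R_{α,F∘E} = R_{α,E} ∘ R_{E(α),F}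
    (hcomp : ∀ (A B C : Type) [Fintype A] [Fintype B] [Fintype C]
      (α : Matrix A A ℂ)
      (E : Matrix A A ℂ →ₗ[ℂ] Matrix B B ℂ) (F : Matrix B B ℂ →ₗ[ℂ] Matrix C C ℂ),
      α.PosDef → α.trace = 1 →
      IsCP E → (∀ X, (E X).trace = X.trace) → (E α).PosDef →
      IsCP F → (∀ Y, (F Y).trace = Y.trace) → (F (E α)).PosDef →
      R A C α (F.comp E) = (R A B α E).comp (R B C (E α) F))
    -- (iii) stabilization with respect to identities:
    -- R_{α⊗γ, E⊗id} = R_{α,E} ⊗ R_{γ,id}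
    (hstab₁ : ∀ (A B C : Type) [Fintype A] [Fintype B] [Fintype C]
      (α : Matrix A A ℂ) (γ : Matrix C C ℂ)
      (E : Matrix A A ℂ →ₗ[ℂ] Matrix B B ℂ),
      α.PosDef → α.trace = 1 → γ.PosDef → γ.trace = 1 →
      IsCP E → (∀ X, (E X).trace = X.trace) → (E α).PosDef →
      ∀ (T : Matrix (A × C) (A × C) ℂ →ₗ[ℂ] Matrix (B × C) (B × C) ℂ)
        (S : Matrix (B × C) (B × C) ℂ →ₗ[ℂ] Matrix (A × C) (A × C) ℂ),
        IsTensorOf T E LinearMap.id →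
        IsTensorOf S (R A B α E) (R C C γ LinearMap.id) →
        R (A × C) (B × C) (α ⊗ₖ γ) T = S)
    -- and R_{γ⊗α, id⊗E} = R_{γ,id} ⊗ R_{α,E}
    (hstab₂ : ∀ (A B C : Type) [Fintype A] [Fintype B] [Fintype C]
      (α : Matrix A A ℂ) (γ : Matrix C C ℂ)
      (E : Matrix A A ℂ →ₗ[ℂ] Matrix B B ℂ),
      α.PosDef → α.trace = 1 → γ.PosDef → γ.trace = 1 →
      IsCP E → (∀ X, (E X).trace = X.trace) → (E α).PosDef →
      ∀ (T : Matrix (C × A) (C × A) ℂ →ₗ[ℂ] Matrix (C × B) (C × B) ℂ)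
        (S : Matrix (C × B) (C × B) ℂ →ₗ[ℂ] Matrix (C × A) (C × A) ℂ),
        IsTensorOf T LinearMap.id E →
        IsTensorOf S (R C C γ LinearMap.id) (R A B α E) →
        R (C × A) (C × B) (γ ⊗ₖ α) T = S) :
    -- then R is tensorial: R_{α⊗α', E⊗E'} = R_{α,E} ⊗ R_{α',E'}
    ∀ (A A' B B' : Type) [Fintype A] [Fintype A'] [Fintype B] [Fintype B']
      (α : Matrix A A ℂ) (α' : Matrix A' A' ℂ)
      (E : Matrix A A ℂ →ₗ[ℂ] Matrix B B ℂ)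
      (E' : Matrix A' A' ℂ →ₗ[ℂ] Matrix B' B' ℂ),
      α.PosDef → α.trace = 1 → α'.PosDef → α'.trace = 1 →
      IsCP E → (∀ X, (E X).trace = X.trace) → (E α).PosDef →
      IsCP E' → (∀ X', (E' X').trace = X'.trace) → (E' α').PosDef →
      ∀ (T : Matrix (A × A') (A × A') ℂ →ₗ[ℂ] Matrix (B × B') (B × B') ℂ)
        (S : Matrix (B × B') (B × B') ℂ →ₗ[ℂ] Matrix (A × A') (A × A') ℂ),
        IsTensorOf T E E' →
        IsTensorOf S (R A B α E) (R A' B' α' E') →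
        R (A × A') (B × B') (α ⊗ₖ α') T = S := by
  intro A A' B B' _ _ _ _ α α' E E' hα hαt hα' hα't hE hEt hEα hE' hE't hE'α' T S hT hS
  classical
  set T₁ : Matrix (A × A') (A × A') ℂ →ₗ[ℂ] Matrix (B × A') (B × A') ℂ := tenR E with hT₁
  set F : Matrix (B × A') (B × A') ℂ →ₗ[ℂ] Matrix (B × B') (B × B') ℂ := tenL E' with hF
  have hT₁ten : IsTensorOf T₁ E LinearMap.id := isTensorOf_tenR E
  have hFten : IsTensorOf F LinearMap.id E' := isTensorOf_tenL E'
  have hαα' : (α ⊗ₖ α').PosDef := posDef_kronecker hα hα'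
  have htr : (α ⊗ₖ α').trace = 1 := by rw [trace_kronecker, hαt, hα't, one_mul]
  have hT₁val : T₁ (α ⊗ₖ α') = E α ⊗ₖ α' := by
    have := hT₁ten α α'; simpa using this
  have hFval : F (E α ⊗ₖ α') = E α ⊗ₖ E' α' := by
    have := hFten (E α) α'; simpa using this
  have hEαt : (E α).trace = 1 := (hEt α).trans hαt
  have hEαα' : (E α ⊗ₖ α').PosDef := posDef_kronecker hEα hα'
  have hEE'αα' : (E α ⊗ₖ E' α').PosDef := posDef_kronecker hEα hE'α'
  -- T is the composite F ∘ T₁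
  have hTcomp : T = F.comp T₁ := by
    apply tensor_unique hT
    intro X X'
    simp only [LinearMap.comp_apply]
    rw [hT₁ten X X', show (LinearMap.id X' : Matrix A' A' ℂ) = X' from rfl,
      hFten (E X) X']
    rfl
  -- apply compositionality
  have hcompEq := hcomp (A × A') (B × A') (B × B') (α ⊗ₖ α') T₁ F hαα' htr
    (isCP_tenR hE) (trace_tenR hEt) (by rw [hT₁val]; exact hEαα')
    (isCP_tenL hE') (trace_tenL hE't) (by rw [hT₁val, hFval]; exact hEE'αα')
  -- first stabilization
  have h1 : R (A × A') (B × A') (α ⊗ₖ α') T₁ = tenR (R A B α E) := by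
    apply hstab₁ A B A' α α' E hα hαt hα' hα't hE hEt hEα T₁ _ hT₁ten
    rw [hnorm A' α' hα' hα't]
    exact isTensorOf_tenR _
  -- second stabilization
  have h2 : R (B × A') (B × B') (E α ⊗ₖ α') F = tenL (R A' B' α' E') := by
    apply hstab₂ A' B' B α' (E α) E' hα' hα't hEα hEαt hE' hE't hE'α' F _ hFten
    rw [hnorm B (E α) hEα hEαt]
    exact isTensorOf_tenL _
  rw [hTcomp, hcompEq, hT₁val, h1, h2]
  symm
  apply tensor_unique hS
  intro X X'
  simp only [LinearMap.comp_apply]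
  rw [isTensorOf_tenL (R A' B' α' E') X X',
    show (LinearMap.id X : Matrix B B ℂ) = X from rfl,
    isTensorOf_tenR (R A B α E) X (R A' B' α' E' X')]
  rfl
end
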